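/- On the free infinite magmatic algebra Mag^∞(V), the reduced coproducts satisfy: for a tree T = ∨_n(T_1,...,T_n) obtained by n-grafting of nonempty trees, Δ̄_m(T) = 0 for all m ≠ n, and Δ̄_n(T) = T_1 ⊗ ··· ⊗ T_n. In particular, for the n-corolla T_n one has Δ̄_m(T_n) = 0 for m ≠ n and Δ̄_n(T_n) = |^{⊗n}. -/

import Mathlib

open scoped TensorProduct PiTensorProduct

noncomputable section

/-- Planar rooted trees: a leaf, or the grafting of `k + 2` trees onto a new root. -/
inductive PTree : Type
  | leaf : PTree
  | graft : (k : ℕ) → (Fin (k + 2) → PTree) → PTree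

namespace PTree

/-- Number of leaves of a planar rooted tree. -/
@[reducible] noncomputable def leaves (t : PTree) : ℕ :=
  PTree.rec 1 (fun _ _ ih => ∑ i, ih i) t

/-- The `n`-corolla (with `n = k + 2` leaves). -/
def corolla (k : ℕ) : PTree := .graft k fun _ => .leaf

/-- Height of a planar rooted tree: the maximal number of internal vertices on a
path from the root to a leaf (so the leaf `|` has height 0 and the corollas have
height 1). -/
@[reducible] noncomputable def height (t : PTree) : ℕ :=
  PTree.rec 0 (fun _ _ ih => (Finset.univ.sup ih) + 1) t

end PTree

/-- The index in `Fin (n_1 + ⋯ + n_k)` corresponding to the pair `(j, i)` with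
`i : Fin (n j)` (concatenation of blocks, in order). -/
def sigmaIdx {k : ℕ} (n : Fin k → ℕ) (j : Fin k) (i : Fin (n j)) : Fin (∑ j', n j') :=
  ⟨(∑ j' ∈ Finset.univ.filter (fun j' => j' < j), n j') + i.1, by
    have hj : j ∉ Finset.univ.filter (fun j' => j' < j) := by simp
    have h2 : (∑ j' ∈ insert j (Finset.univ.filter (fun j' => j' < j)), n j') ≤ ∑ j', n j' :=
      Finset.sum_le_sum_of_subset (Finset.subset_univ _)
    rw [Finset.sum_insert hj] at h2
    have := i.2
    omega⟩

variable (K : Type*) [Field K]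

/-- The raw data of an "infinite magmatic bialgebra": an `(n+2)`-ary multilinear
operation and an `(n+2)`-ary cooperation for every `n`, together with a unit
element and a counit. -/
structure BOps (H : Type*) [AddCommGroup H] [Module K H] where
  /-- the `(n+2)`-ary operations `μ_{n+2}` -/
  mu : ∀ n : ℕ, MultilinearMap K (fun _ : Fin (n + 2) => H) H
  /-- the common unit of the operations -/
  one : H
  /-- the common counit of the cooperations -/
  counit : H →ₗ[K] K
  /-- the `(n+2)`-ary cooperations `Δ_{n+2}` -/
  Delta : ∀ n : ℕ, H →ₗ[K] ⨂[K] _ : Fin (n + 2), H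

variable {H : Type*} [AddCommGroup H] [Module K H]

/-- The linear map `x ↦ 1^{⊗i} ⊗ x ⊗ 1^{⊗(n-1-i)}` placing `x` in slot `i` and the
unit everywhere else. -/
noncomputable def unitSlot (one : H) {n : ℕ} (i : Fin n) :
    H →ₗ[K] ⨂[K] _ : Fin n, H :=
  (PiTensorProduct.tprod K (s := fun _ : Fin n => H)).toLinearMap (fun _ => one) i

/-- `S` is an infinite magmatic algebra: all operations share the unit, and
inserting the unit in any slot of `μ_{n+1}` yields `μ_n` on the remaining
arguments (with `μ_1 = id` as base case). -/
def IsIMAlg (S : BOps K H) : Prop :=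
  (∀ (x : Fin 2 → H) (i : Fin 2), x i = S.one → S.mu 0 x = x i.rev) ∧
  (∀ (n : ℕ) (x : Fin (n + 3) → H) (i : Fin (n + 3)), x i = S.one →
    S.mu (n + 1) x = S.mu n (fun j => x (i.succAbove j)))

/-- Contraction of the `i`-th tensor factor by a linear functional `c`:
`x_1 ⊗ ⋯ ⊗ x_{n+1} ↦ c(x_i) · (x_1 ⊗ ⋯ x̂_i ⋯ ⊗ x_{n+1})`. -/
noncomputable def ctr (c : H →ₗ[K] K) (n : ℕ) (i : Fin (n + 1)) :
    (⨂[K] _ : Fin (n + 1), H) →ₗ[K] ⨂[K] _ : Fin n, H :=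
  (TensorProduct.lid K _).toLinearMap ∘ₗ
    (TensorProduct.map
      (c ∘ₗ (PiTensorProduct.subsingletonEquiv (0 : Fin 1)).toLinearMap) LinearMap.id) ∘ₗ
    (PiTensorProduct.tmulEquiv K H).symm.toLinearMap ∘ₗ
    (PiTensorProduct.reindex K (fun _ => H)
      ((i.cycleRange).trans ((finCongr (Nat.add_comm n 1)).trans
        finSumFinEquiv.symm))).toLinearMap

/-- `S` is a (co-augmented) infinite magmatic coalgebra: the cooperations share the
counit `c`, contracting any slot of `Δ_{n+1}` by `c` yields `Δ_n` (with
`Δ_1 = id` as base case), and the unit is grouplike for all cooperations. -/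
def IsIMCoalg (S : BOps K H) : Prop :=
  S.counit S.one = 1 ∧
  (∀ n, S.Delta n S.one = PiTensorProduct.tprod K (fun _ => S.one)) ∧
  (∀ i : Fin 2,
    (PiTensorProduct.subsingletonEquiv (0 : Fin 1)).toLinearMap ∘ₗ
      ctr K S.counit 1 i ∘ₗ S.Delta 0 = LinearMap.id) ∧
  (∀ (n : ℕ) (i : Fin (n + 3)), ctr K S.counit (n + 2) i ∘ₗ S.Delta (n + 1) = S.Delta n)

open Classical in
/-- The infinite magmatic compatibility relations between the operations and the
cooperations, for arguments in the augmentation ideal (kernel of the counit). -/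
def IsCompat (S : BOps K H) : Prop :=
  ∀ (n : ℕ) (xs : Fin (n + 2) → H), (∀ i, S.counit (xs i) = 0) →
    (S.Delta n (S.mu n xs) =
      PiTensorProduct.tprod K xs + ∑ i : Fin (n + 2), unitSlot K S.one i (S.mu n xs)) ∧
    (∀ m : ℕ, m < n →
      S.Delta m (S.mu n xs) = ∑ i : Fin (m + 2), unitSlot K S.one i (S.mu n xs)) ∧
    (∀ m : ℕ, n < m →
      S.Delta m (S.mu n xs) =
        (∑ i : Fin (m + 2), unitSlot K S.one i (S.mu n xs)) +
        ∑ f ∈ Finset.univ.filter (fun f : Fin (n + 2) → Fin (m + 2) => StrictMono f),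
          PiTensorProduct.tprod K
            (fun i => if h : ∃ j, f j = i then xs h.choose else S.one))

/-- `σ` is an `(p, r)`-shuffle: a permutation of `Fin (p + r)` which is order
preserving on the first `p` and on the last `r` positions. -/
def IsShuffle (p r : ℕ) (σ : Equiv.Perm (Fin (p + r))) : Prop :=
  (∀ i j : Fin p, i < j → σ (Fin.castAdd r i) < σ (Fin.castAdd r j)) ∧
  (∀ i j : Fin r, i < j → σ (Fin.natAdd p i) < σ (Fin.natAdd p j))

/-- Pad a tensor of arity `m` with `r` copies of the unit on the right and then
permute the `m + r` factors by `σ`; this is the operation `y ↦ σ ∘ (y, 1^{⊗r})`. -/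
noncomputable def padPerm (one : H) (m r : ℕ) (σ : Equiv.Perm (Fin (m + r))) :
    (⨂[K] _ : Fin m, H) →ₗ[K] ⨂[K] _ : Fin (m + r), H :=
  (PiTensorProduct.reindex K (fun _ => H) (σ : Fin (m + r) ≃ Fin (m + r))).toLinearMap ∘ₗ
    (PiTensorProduct.reindex K (fun _ => H) finSumFinEquiv).toLinearMap ∘ₗ
    (PiTensorProduct.tmulEquiv K H).toLinearMap ∘ₗ
    ((TensorProduct.mk K _ _).flip (PiTensorProduct.tprod K (fun _ : Fin r => one)))

open Classical in
/-- The reduced cooperations `Δ̄_{n+2}`, defined recursively by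
`Δ̄_n(x) = Δ_n(x) - Σ_{i+j=n-1} 1^{⊗i} ⊗ x ⊗ 1^{⊗j}
  - Σ_{m=2}^{n-1} Σ_{σ ∈ Sh(m, n-m)} σ ∘ (Δ̄_m(x), 1^{⊗(n-m)})`. -/
noncomputable def rDelta (S : BOps K H) : (n : ℕ) → H →ₗ[K] ⨂[K] _ : Fin (n + 2), H
  | n =>
    S.Delta n - (∑ i : Fin (n + 2), unitSlot K S.one i)
      - ∑ m ∈ (Finset.range n).attach,
          ∑ σ ∈ Finset.univ.filter (IsShuffle (m.1 + 2) (n - m.1)),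
            (PiTensorProduct.reindex K (fun _ => H)
                (finCongr (show (m.1 + 2) + (n - m.1) = n + 2 by
                  have := Finset.mem_range.mp m.2; omega))).toLinearMap ∘ₗ
              padPerm K S.one (m.1 + 2) (n - m.1) σ ∘ₗ rDelta S m.1
  termination_by n => n
  decreasing_by exact Finset.mem_range.mp m.2

/-- The primitive part `Prim H = ∩_{n ≥ 2} ker Δ̄_n`. -/
noncomputable def Prim (S : BOps K H) : Submodule K H :=
  ⨅ n : ℕ, LinearMap.ker (rDelta K S n)

/-- The `n`-th tensor power of a submodule `N ⊆ H`, as a submodule of `H^{⊗n}`. -/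
noncomputable def tpow (N : Submodule K H) (n : ℕ) :
    Submodule K (⨂[K] _ : Fin n, H) :=
  LinearMap.range (PiTensorProduct.map (fun _ : Fin n => N.subtype))

/-- The coradical-type filtration: `F_0 = K·1` and
`F_r = ∩_{n ≥ 2} {x | Δ̄_n(x) ∈ (F_{r-1})^{⊗n}}`. -/
noncomputable def Fil (S : BOps K H) : ℕ → Submodule K H
  | 0 => Submodule.span K {S.one}
  | r + 1 => ⨅ n : ℕ, Submodule.comap (rDelta K S n) (tpow K (Fil S r) (n + 2))

/-- The coalgebra is connected: `H = ∪_r F_r`. -/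
def Connected (S : BOps K H) : Prop := ∀ x : H, ∃ r, x ∈ Fil K S r

/-- `J = Id - u∘c`, the projection onto the augmentation ideal. -/
noncomputable def Jmap (S : BOps K H) : H →ₗ[K] H :=
  LinearMap.id - (LinearMap.toSpanSingleton K H S.one) ∘ₗ S.counit

/-- The `(n+2)`-ary convolution power `⋆_{n+2}(J, …, J) = μ_{n+2} ∘ J^{⊗(n+2)} ∘ Δ_{n+2}`. -/
noncomputable def starJ (S : BOps K H) (n : ℕ) : H →ₗ[K] H :=
  PiTensorProduct.lift (S.mu n) ∘ₗ
    PiTensorProduct.map (fun _ => Jmap K S) ∘ₗ S.Delta n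

/-- The idempotent `e = J - Σ_{n ≥ 2} ⋆_n ∘ J^{⊗n}`; the sum is locally finite by
connectedness. -/
noncomputable def eMap (S : BOps K H) : H → H :=
  fun x => Jmap K S x - ∑ᶠ n : ℕ, starJ K S n x

attribute [local instance] Classical.decEq

/-- A model of the free infinite magmatic algebra `Mag^∞(V)` on the vector space
`V`: for each planar tree `t` a multilinear "labelled tree" map
`ι t : V^{leaves t} → M`, such that the operations are given by grafting of
labelled trees and `M` is freely spanned by the unit together with the labelled
trees (i.e. the canonical map `K ⊕ (⊕_t V^{⊗ leaves t}) → M` is bijective). -/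
structure MagAlgModel (V M : Type*) [AddCommGroup V] [Module K V]
    [AddCommGroup M] [Module K M] (S : BOps K M) where
  /-- the labelled tree `(t; v_1 ⋯ v_n)` -/
  ι : (t : PTree) → MultilinearMap K (fun _ : Fin t.leaves => V) M
  /-- the operations are given by grafting of labelled trees -/
  ι_graft : ∀ (k : ℕ) (ts : Fin (k + 2) → PTree) (v : Fin (PTree.graft k ts).leaves → V),
    S.mu k (fun j => ι (ts j) (fun i => v (sigmaIdx (fun j' => (ts j').leaves) j i))) =
      ι (.graft k ts) v
  /-- `M = K·1 ⊕ (⊕_t V^{⊗ leaves t})` via the labelled trees -/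
  free : Function.Bijective
    (LinearMap.coprod (LinearMap.toSpanSingleton K M S.one)
      (DFinsupp.lsum ℕ (fun t : PTree => PiTensorProduct.lift (ι t))))

/-- The canonical inclusion `V = Mag_1 ⊗ V → Mag^∞(V)`, `v ↦ (|; v)`. -/
noncomputable def leafLin {V M : Type*} [AddCommGroup V] [Module K V]
    [AddCommGroup M] [Module K M] {S : BOps K M} (mod : MagAlgModel K V M S) :
    V →ₗ[K] M :=
  PiTensorProduct.lift (mod.ι .leaf) ∘ₗ
    (PiTensorProduct.subsingletonEquiv (s := fun _ : Fin 1 => V) (0 : Fin 1)).symm.toLinearMap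

open Classical in
/-- A model of the free infinite magmatic bialgebra `Mag^∞(V)`: a model of the free
algebra whose cooperations are the ungraftings of labelled trees. -/
structure MagModel (V M : Type*) [AddCommGroup V] [Module K V]
    [AddCommGroup M] [Module K M] (S : BOps K M) extends MagAlgModel K V M S where
  counit_one : S.counit S.one = 1
  counit_ι : ∀ (t : PTree) (v : Fin t.leaves → V), S.counit (ι t v) = 0
  delta_one : ∀ n, S.Delta n S.one = PiTensorProduct.tprod K (fun _ => S.one)
  delta_leaf : ∀ (n : ℕ) (v : Fin (PTree.leaf).leaves → V),
    S.Delta n (ι .leaf v) = ∑ i : Fin (n + 2), unitSlot K S.one i (ι .leaf v)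
  delta_graft_eq : ∀ (k : ℕ) (ts : Fin (k + 2) → PTree)
      (v : Fin (PTree.graft k ts).leaves → V),
    S.Delta k (ι (.graft k ts) v) =
      PiTensorProduct.tprod K
        (fun j => ι (ts j) (fun i => v (sigmaIdx (fun j' => (ts j').leaves) j i))) +
      ∑ i : Fin (k + 2), unitSlot K S.one i (ι (.graft k ts) v)
  delta_graft_lt : ∀ (m k : ℕ) (ts : Fin (k + 2) → PTree)
      (v : Fin (PTree.graft k ts).leaves → V), m < k →
    S.Delta m (ι (.graft k ts) v) =
      ∑ i : Fin (m + 2), unitSlot K S.one i (ι (.graft k ts) v)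
  delta_graft_gt : ∀ (m k : ℕ) (ts : Fin (k + 2) → PTree)
      (v : Fin (PTree.graft k ts).leaves → V), k < m →
    S.Delta m (ι (.graft k ts) v) =
      (∑ i : Fin (m + 2), unitSlot K S.one i (ι (.graft k ts) v)) +
      ∑ f ∈ Finset.univ.filter (fun f : Fin (k + 2) → Fin (m + 2) => StrictMono f),
        PiTensorProduct.tprod K (fun i =>
          if h : ∃ j, f j = i then
            ι (ts h.choose) (fun i' => v (sigmaIdx (fun j' => (ts j').leaves) h.choose i'))
          else S.one)

open Classical in
lemma rDelta_unfold (S : BOps K H) (n : ℕ) :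
    rDelta K S n = S.Delta n - (∑ i : Fin (n + 2), unitSlot K S.one i)
      - ∑ m ∈ (Finset.range n).attach,
          ∑ σ ∈ Finset.univ.filter (IsShuffle (m.1 + 2) (n - m.1)),
            (PiTensorProduct.reindex K (fun _ => H)
                (finCongr (show (m.1 + 2) + (n - m.1) = n + 2 by
                  have := Finset.mem_range.mp m.2; omega))).toLinearMap ∘ₗ
              padPerm K S.one (m.1 + 2) (n - m.1) σ ∘ₗ rDelta K S m.1 := by
  conv_lhs => rw [rDelta]

open Classical in
lemma key_sum (p r n : ℕ) (e : p + r = n) (one : H) (xs : Fin p → H) :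
    ∑ σ ∈ Finset.univ.filter (IsShuffle p r),
        (PiTensorProduct.reindex K (fun _ => H) (finCongr e)).toLinearMap
          (padPerm K one p r σ (PiTensorProduct.tprod K xs)) =
    ∑ f ∈ Finset.univ.filter (fun f : Fin p → Fin n => StrictMono f),
        PiTensorProduct.tprod K
          (fun i => if h : ∃ j, f j = i then xs h.choose else one) := by
  refine Finset.sum_bij (fun σ _ => fun a => finCongr e (σ (Fin.castAdd r a))) ?_ ?_ ?_ ?_
  · intro σ hσ
    rw [Finset.mem_filter] at hσ ⊢
    refine ⟨Finset.mem_univ _, fun a b hab => ?_⟩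
    exact hσ.2.1 a b hab
  · intro σ₁ h₁ σ₂ h₂ hmap
    rw [Finset.mem_filter] at h₁ h₂
    have hc : ∀ a, σ₁ (Fin.castAdd r a) = σ₂ (Fin.castAdd r a) := fun a =>
      (finCongr e).injective (congrFun hmap a)
    have hinj1 : Function.Injective fun a : Fin p => σ₁ (Fin.castAdd r a) := fun a b hab =>
      Fin.castAdd_injective _ _ (σ₁.injective hab)
    set s : Finset (Fin (p + r)) :=
      (Finset.univ.image fun a : Fin p => σ₁ (Fin.castAdd r a))ᶜ with hs
    have hcard : s.card = r := by
      rw [hs, Finset.card_compl, Finset.card_image_of_injective _ hinj1]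
      simp
    have hmem : ∀ σ : Equiv.Perm (Fin (p + r)),
        (∀ a, σ (Fin.castAdd r a) = σ₁ (Fin.castAdd r a)) →
        ∀ b : Fin r, σ (Fin.natAdd p b) ∈ s := by
      intro σ hcc b
      rw [hs, Finset.mem_compl]
      intro hmem'
      obtain ⟨a, -, ha⟩ := Finset.mem_image.mp hmem'
      rw [← hcc a] at ha
      have h3 := congrArg Fin.val (σ.injective ha)
      have h4 : a.1 < p := a.isLt
      simp only [Fin.coe_castAdd, Fin.coe_natAdd] at h3
      omega
    have hu1 : (fun b : Fin r => σ₁ (Fin.natAdd p b)) = s.orderEmbOfFin hcard :=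
      Finset.orderEmbOfFin_unique hcard (hmem σ₁ fun _ => rfl)
        (fun a b hab => h₁.2.2 a b hab)
    have hu2 : (fun b : Fin r => σ₂ (Fin.natAdd p b)) = s.orderEmbOfFin hcard :=
      Finset.orderEmbOfFin_unique hcard (hmem σ₂ fun a => (hc a).symm)
        (fun a b hab => h₂.2.2 a b hab)
    refine Equiv.ext fun i => ?_
    refine Fin.addCases (motive := fun i => σ₁ i = σ₂ i) (fun a => hc a) (fun b => ?_) i
    exact (congrFun hu1 b).trans (congrFun hu2 b).symm
  · intro f hf
    rw [Finset.mem_filter] at hf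
    have hfinj := hf.2.injective
    set s : Finset (Fin n) := (Finset.univ.image f)ᶜ with hs
    have hcard : s.card = r := by
      rw [hs, Finset.card_compl, Finset.card_image_of_injective _ hfinj]
      simp only [Finset.card_univ, Fintype.card_fin]
      omega
    have hginj : Function.Injective (s.orderEmbOfFin hcard) :=
      (s.orderEmbOfFin hcard).injective
    have hgmem : ∀ b, (s.orderEmbOfFin hcard) b ∈ s := fun b =>
      Finset.orderEmbOfFin_mem s hcard b
    have hFinj : Function.Injective (fun i : Fin (p + r) =>
        (finCongr e).symm (Sum.elim f (s.orderEmbOfFin hcard) (finSumFinEquiv.symm i))) := by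
      intro i j hij
      have h2 := (finCongr e).symm.injective hij
      have key : ∀ x y : Fin p ⊕ Fin r,
          Sum.elim f (s.orderEmbOfFin hcard) x = Sum.elim f (s.orderEmbOfFin hcard) y →
          x = y := by
        rintro (a | b) (a' | b') hxy <;>
          simp only [Sum.elim_inl, Sum.elim_inr] at hxy
        · rw [hfinj hxy]
        · exfalso
          have hgm : (s.orderEmbOfFin hcard) b' ∉ Finset.image f Finset.univ :=
            Finset.mem_compl.mp (hgmem b')
          exact hgm (by rw [← hxy]; exact Finset.mem_image_of_mem f (Finset.mem_univ a))
        · exfalso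
          have hgm : (s.orderEmbOfFin hcard) b ∉ Finset.image f Finset.univ :=
            Finset.mem_compl.mp (hgmem b)
          exact hgm (by rw [hxy]; exact Finset.mem_image_of_mem f (Finset.mem_univ a'))
        · rw [hginj hxy]
      exact finSumFinEquiv.symm.injective (key _ _ h2)
    refine ⟨Equiv.ofBijective _ (Finite.injective_iff_bijective.mp hFinj),
      Finset.mem_filter.mpr ⟨Finset.mem_univ _, ?_, ?_⟩, ?_⟩
    · intro a b hab
      show (finCongr e).symm (Sum.elim _ _ (finSumFinEquiv.symm (Fin.castAdd r a))) <
        (finCongr e).symm (Sum.elim _ _ (finSumFinEquiv.symm (Fin.castAdd r b)))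
      simp only [finSumFinEquiv_symm_apply_castAdd, Sum.elim_inl]
      exact hf.2 hab
    · intro a b hab
      show (finCongr e).symm (Sum.elim _ _ (finSumFinEquiv.symm (Fin.natAdd p a))) <
        (finCongr e).symm (Sum.elim _ _ (finSumFinEquiv.symm (Fin.natAdd p b)))
      simp only [finSumFinEquiv_symm_apply_natAdd, Sum.elim_inr]
      exact (s.orderEmbOfFin hcard).strictMono hab
    · funext a
      show finCongr e ((finCongr e).symm
        (Sum.elim f (s.orderEmbOfFin hcard) (finSumFinEquiv.symm (Fin.castAdd r a)))) = f a
      simp [finSumFinEquiv_symm_apply_castAdd]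
  · intro σ hσ
    rw [Finset.mem_filter] at hσ
    have hfinj : Function.Injective fun a : Fin p => finCongr e (σ (Fin.castAdd r a)) :=
      fun a b hab => Fin.castAdd_injective _ _ (σ.injective ((finCongr e).injective hab))
    rw [padPerm]
    simp only [LinearMap.coe_comp, Function.comp_apply, LinearEquiv.coe_coe,
      LinearMap.flip_apply, TensorProduct.mk_apply, PiTensorProduct.tmulEquiv_apply,
      PiTensorProduct.reindex_tprod]
    congr 1
    funext i
    rcases hh : finSumFinEquiv.symm (σ.symm ((finCongr e).symm i)) with a | b
    · rw [Sum.elim_inl]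
      have hfa : finCongr e (σ (Fin.castAdd r a)) = i := by
        have h1 : σ.symm ((finCongr e).symm i) = Fin.castAdd r a := by
          apply finSumFinEquiv.symm.injective
          rw [hh, finSumFinEquiv_symm_apply_castAdd]
        have h2 : (finCongr e).symm i = σ (Fin.castAdd r a) := by
          rw [← h1, Equiv.apply_symm_apply]
        rw [← h2, Equiv.apply_symm_apply]
      have hex : ∃ j, finCongr e (σ (Fin.castAdd r j)) = i := ⟨a, hfa⟩
      rw [dif_pos hex]
      exact congrArg xs (hfinj (hex.choose_spec.trans hfa.symm)).symm
    · rw [Sum.elim_inr, dif_neg]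
      rintro ⟨j, hj⟩
      have h1 : σ.symm ((finCongr e).symm i) = Fin.castAdd r j := by
        rw [← hj]
        simp
      rw [h1, finSumFinEquiv_symm_apply_castAdd] at hh
      cases hh

open Classical in
lemma rDelta_of_delta (S : BOps K H) (T : H) (k : ℕ) (y : Fin (k + 2) → H)
    (heq : S.Delta k T =
      PiTensorProduct.tprod K y + ∑ i : Fin (k + 2), unitSlot K S.one i T)
    (hlt : ∀ m, m < k → S.Delta m T = ∑ i : Fin (m + 2), unitSlot K S.one i T)
    (hgt : ∀ m, k < m → S.Delta m T =
      (∑ i : Fin (m + 2), unitSlot K S.one i T) +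
      ∑ f ∈ Finset.univ.filter (fun f : Fin (k + 2) → Fin (m + 2) => StrictMono f),
        PiTensorProduct.tprod K
          (fun i => if h : ∃ j, f j = i then y h.choose else S.one)) :
    ∀ m, (m ≠ k → rDelta K S m T = 0) ∧
      (m = k → rDelta K S k T = PiTensorProduct.tprod K y) := by
  intro m
  induction m using Nat.strong_induction_on with
  | _ m IH =>
  rcases lt_trichotomy m k with h | h | h
  · refine ⟨fun _ => ?_, fun hc => absurd hc (by omega)⟩
    rw [rDelta_unfold]
    simp only [LinearMap.sub_apply, LinearMap.sum_apply, LinearMap.comp_apply]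
    rw [hlt m h, sub_self, zero_sub, neg_eq_zero]
    refine Finset.sum_eq_zero fun m' _ => Finset.sum_eq_zero fun σ _ => ?_
    rw [(IH m'.1 (Finset.mem_range.mp m'.2)).1
      (by have := Finset.mem_range.mp m'.2; omega), map_zero, map_zero]
  · subst h
    refine ⟨fun hne => absurd rfl hne, fun _ => ?_⟩
    rw [rDelta_unfold]
    simp only [LinearMap.sub_apply, LinearMap.sum_apply, LinearMap.comp_apply]
    rw [heq, add_sub_cancel_right, sub_eq_self]
    refine Finset.sum_eq_zero fun m' _ => Finset.sum_eq_zero fun σ _ => ?_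
    rw [(IH m'.1 (Finset.mem_range.mp m'.2)).1
      (by have := Finset.mem_range.mp m'.2; omega), map_zero, map_zero]
  · refine ⟨fun _ => ?_, fun hc => absurd hc (by omega)⟩
    rw [rDelta_unfold]
    simp only [LinearMap.sub_apply, LinearMap.sum_apply, LinearMap.comp_apply]
    rw [hgt m h, add_sub_cancel_left, sub_eq_zero]
    symm
    refine Eq.trans (Finset.sum_eq_single_of_mem
        (⟨k, Finset.mem_range.mpr h⟩ : {x // x ∈ Finset.range m}) (Finset.mem_attach _ _)
        (fun b _ hb => Finset.sum_eq_zero fun σ _ => by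
          rw [(IH b.1 (Finset.mem_range.mp b.2)).1 (fun hc => hb (Subtype.ext hc)),
            map_zero, map_zero])) ?_
    show (∑ σ ∈ Finset.univ.filter (IsShuffle (k + 2) (m - k)),
        (PiTensorProduct.reindex K (fun _ => H)
            (finCongr (show (k + 2) + (m - k) = m + 2 by omega))).toLinearMap
          (padPerm K S.one (k + 2) (m - k) σ (rDelta K S k T))) = _
    rw [(IH k h).2 rfl]
    exact key_sum K (k + 2) (m - k) (m + 2) (by omega) S.one y

/-- On the free infinite magmatic algebra `Mag^∞(V)`, for a tree
`T = ∨_{k+2}(T_1, …, T_{k+2})` obtained by grafting, the reduced cooperations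
satisfy `Δ̄_m(T) = 0` for `m ≠ k + 2` and `Δ̄_{k+2}(T) = T_1 ⊗ ⋯ ⊗ T_{k+2}`.
In particular for the corolla `c_{k+2}` one has `Δ̄_m(c_{k+2}) = 0` for
`m ≠ k + 2` and `Δ̄_{k+2}(c_{k+2}) = |^{⊗(k+2)}` (with labels distributed over
the single leaves). -/
theorem rDelta_graft (V M : Type*) [AddCommGroup V] [Module K V]
    [AddCommGroup M] [Module K M] (S : BOps K M) (mod : MagModel K V M S) :
    (∀ (k : ℕ) (ts : Fin (k + 2) → PTree) (v : Fin (PTree.graft k ts).leaves → V),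
      (∀ m : ℕ, m ≠ k → rDelta K S m (mod.ι (.graft k ts) v) = 0) ∧
      rDelta K S k (mod.ι (.graft k ts) v) =
        PiTensorProduct.tprod K
          (fun j => mod.ι (ts j) (fun i => v (sigmaIdx (fun j' => (ts j').leaves) j i)))) ∧
    (∀ (k : ℕ) (v : Fin (PTree.corolla k).leaves → V),
      (∀ m : ℕ, m ≠ k → rDelta K S m (mod.ι (PTree.corolla k) v) = 0) ∧
      rDelta K S k (mod.ι (PTree.corolla k) v) =
        PiTensorProduct.tprod K
          (fun j : Fin (k + 2) => mod.ι .leaf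
            (fun i => v (sigmaIdx (fun _ : Fin (k + 2) => PTree.leaf.leaves) j i)))) := by
  have main : ∀ (k : ℕ) (ts : Fin (k + 2) → PTree) (v : Fin (PTree.graft k ts).leaves → V),
      (∀ m : ℕ, m ≠ k → rDelta K S m (mod.ι (.graft k ts) v) = 0) ∧
      rDelta K S k (mod.ι (.graft k ts) v) =
        PiTensorProduct.tprod K
          (fun j => mod.ι (ts j) (fun i => v (sigmaIdx (fun j' => (ts j').leaves) j i))) := by
    intro k ts v
    have h := rDelta_of_delta K S (mod.ι (.graft k ts) v) k
      (fun j => mod.ι (ts j) (fun i => v (sigmaIdx (fun j' => (ts j').leaves) j i)))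
      (mod.delta_graft_eq k ts v)
      (fun m hm => mod.delta_graft_lt m k ts v hm)
      (fun m hm => mod.delta_graft_gt m k ts v hm)
    exact ⟨fun m hm => (h m).1 hm, (h k).2 rfl⟩
  exact ⟨main, fun k v => main k (fun _ => .leaf) v⟩

end
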